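/- Let X be a finite set of integers each greater than 1. Then the number of connected components of the bipartite divisor graph B(X) equals the number of connected components of the common divisor graph Γ(X), where Γ(X) has vertex set X and x is adjacent to y (x ≠ y) iff gcd(x, y) > 1. -/

import Mathlib

open SimpleGraph

/-- Vertex type of the bipartite divisor graph of a set of naturals:
the disjoint union of `X` and of the primes dividing some element of `X`. -/
abbrev BDGVert (X : Set ℕ) : Type :=
  {x : ℕ // x ∈ X} ⊕ {p : ℕ // p.Prime ∧ ∃ x ∈ X, p ∣ x}

/-- The bipartite divisor graph `B(X)`: a prime `p` is adjacent to `x ∈ X` iff `p ∣ x`. -/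
def bdg (X : Set ℕ) : SimpleGraph (BDGVert X) :=
  SimpleGraph.fromRel (fun a b =>
    match a, b with
    | Sum.inr p, Sum.inl x => p.1 ∣ x.1
    | _, _ => False)

/-- The prime graph `Δ(X)`: primes `p ≠ q` are adjacent iff `pq` divides some element of `X`. -/
def primeGraph (X : Set ℕ) : SimpleGraph {p : ℕ // p.Prime ∧ ∃ x ∈ X, p ∣ x} :=
  SimpleGraph.fromRel (fun p q => ∃ x ∈ X, p.1 * q.1 ∣ x)

/-- The common divisor graph `Γ(X)`: distinct `x, y ∈ X` are adjacent iff `gcd(x,y) ≠ 1`. -/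
def cdGraph (X : Set ℕ) : SimpleGraph {x : ℕ // x ∈ X} :=
  SimpleGraph.fromRel (fun a b => Nat.gcd a.1 b.1 ≠ 1)

/-- The set of irreducible complex character degrees of a group `G`. -/
def charDegrees (G : Type) [Group G] : Set ℕ :=
  {n | ∃ V : FDRep ℂ G, CategoryTheory.Simple V ∧ Module.finrank ℂ V = n}

/-- Disjoint union of two simple graphs. -/
def disjUnionGraph {α β : Type*} (G : SimpleGraph α) (H : SimpleGraph β) :
    SimpleGraph (α ⊕ β) where
  Adj a b :=
    match a, b with
    | Sum.inl x, Sum.inl y => G.Adj x y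
    | Sum.inr x, Sum.inr y => H.Adj x y
    | _, _ => False
  symm := ⟨by
    rintro (x | x) (y | y) h <;> simp_all <;> exact h.symm⟩
  loopless := ⟨by
    rintro (x | x) h <;> simp_all⟩

/-!
Send each prime vertex `p` of `B(X)` to an element of `X` that it divides. Two elements of `X`
sharing a prime factor are equal or adjacent in `Γ(X)`, so this map sends edges of `B(X)` to
`Γ(X)`-reachable pairs; conversely an edge `x — y` of `Γ(X)` lifts to the path `x — p — y` of
`B(X)` for any prime `p ∣ gcd(x, y)`. Hence `x ↦ x` induces a bijection between the components of
`Γ(X)` and those of `B(X)`: it is onto because every prime vertex is adjacent to an element of `X`.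
-/

namespace SimpleGraph

variable {V W : Type*} {G : SimpleGraph V} {H : SimpleGraph W}

theorem Reachable.map_of_adj_reachable (f : V → W)
    (hf : ∀ ⦃a b : V⦄, G.Adj a b → H.Reachable (f a) (f b)) {a b : V} (hab : G.Reachable a b) :
    H.Reachable (f a) (f b) := by
  rw [reachable_eq_reflTransGen] at hab ⊢
  exact Relation.ReflTransGen.lift' f (fun _ _ h => reachable_eq_reflTransGen ▸ hf h) _ _ hab

noncomputable def ConnectedComponent.equivOfReachableIff (f : V → W)
    (hf : ∀ u v, H.Reachable (f u) (f v) ↔ G.Reachable u v) (hsurj : ∀ w, ∃ v, H.Reachable (f v) w) :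
    G.ConnectedComponent ≃ H.ConnectedComponent :=
  Equiv.ofBijective
    (ConnectedComponent.lift (fun v => H.connectedComponentMk (f v))
      fun u v p _ => ConnectedComponent.sound ((hf u v).2 p.reachable))
    ⟨fun c c' => ConnectedComponent.ind₂
        (fun u v huv => ConnectedComponent.sound ((hf u v).1 (ConnectedComponent.exact huv))) c c',
      fun c => ConnectedComponent.ind (fun w =>
        let ⟨v, hv⟩ := hsurj w
        ⟨G.connectedComponentMk v, ConnectedComponent.sound hv⟩) c⟩

end SimpleGraph

namespace BDGVert

variable {X : Set ℕ}

noncomputable def toElem : BDGVert X → X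
  | Sum.inl x => x
  | Sum.inr p => ⟨p.2.2.choose, p.2.2.choose_spec.1⟩

theorem dvd_toElem (p : {p : ℕ // p.Prime ∧ ∃ x ∈ X, p ∣ x}) : p.1 ∣ (toElem (Sum.inr p)).1 :=
  p.2.2.choose_spec.2

end BDGVert

section

open BDGVert

variable {X : Set ℕ}

theorem bdg_adj_inl_inr_iff {x : X} {p : {p : ℕ // p.Prime ∧ ∃ x ∈ X, p ∣ x}} :
    (bdg X).Adj (Sum.inl x) (Sum.inr p) ↔ p.1 ∣ x.1 := by
  simp [bdg]

theorem cdGraph_reachable_of_prime_dvd {x y : X} {p : ℕ} (hp : p.Prime) (hx : p ∣ x.1)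
    (hy : p ∣ y.1) : (cdGraph X).Reachable x y := by
  obtain rfl | hxy := eq_or_ne x y
  · rfl
  · refine Adj.reachable ⟨hxy, Or.inl fun hgcd => hp.ne_one ?_⟩
    exact Nat.eq_one_of_dvd_one (hgcd ▸ Nat.dvd_gcd hx hy)

theorem cdGraph_reachable_toElem_of_bdg_adj {a b : BDGVert X} (hab : (bdg X).Adj a b) :
    (cdGraph X).Reachable (toElem a) (toElem b) := by
  match a, b, hab with
  | Sum.inl x, Sum.inr p, hab =>
    exact cdGraph_reachable_of_prime_dvd p.2.1 (bdg_adj_inl_inr_iff.1 hab) (dvd_toElem p)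
  | Sum.inr p, Sum.inl x, hab =>
    exact cdGraph_reachable_of_prime_dvd p.2.1 (dvd_toElem p) (bdg_adj_inl_inr_iff.1 hab.symm)

theorem bdg_reachable_inl_of_cdGraph_adj {x y : X} (hxy : (cdGraph X).Adj x y) :
    (bdg X).Reachable (Sum.inl x) (Sum.inl y) := by
  have hgcd : Nat.gcd x y ≠ 1 := by
    obtain ⟨-, h | h⟩ := hxy
    · exact h
    · rwa [Nat.gcd_comm]
  obtain ⟨p, hp, hpgcd⟩ := Nat.exists_prime_and_dvd hgcd
  have hpx := hpgcd.trans (Nat.gcd_dvd_left _ _)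
  let q : {p : ℕ // p.Prime ∧ ∃ x ∈ X, p ∣ x} := ⟨p, hp, x, x.2, hpx⟩
  have hxq : (bdg X).Adj (Sum.inl x) (Sum.inr q) := bdg_adj_inl_inr_iff.2 hpx
  have hyq : (bdg X).Adj (Sum.inl y) (Sum.inr q) :=
    bdg_adj_inl_inr_iff.2 (hpgcd.trans (Nat.gcd_dvd_right _ _))
  exact hxq.reachable.trans hyq.symm.reachable

theorem bdg_reachable_inl_iff {x y : X} :
    (bdg X).Reachable (Sum.inl x) (Sum.inl y) ↔ (cdGraph X).Reachable x y :=
  ⟨Reachable.map_of_adj_reachable toElem fun _ _ => cdGraph_reachable_toElem_of_bdg_adj,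
    Reachable.map_of_adj_reachable Sum.inl fun _ _ => bdg_reachable_inl_of_cdGraph_adj⟩

theorem bdg_reachable_inl_toElem (v : BDGVert X) : (bdg X).Reachable (Sum.inl (toElem v)) v := by
  rcases v with x | p
  · rfl
  · exact (bdg_adj_inl_inr_iff.2 (dvd_toElem p)).reachable

end

theorem stmt1_general (X : Set ℕ) :
    Nat.card (bdg X).ConnectedComponent = Nat.card (cdGraph X).ConnectedComponent :=
  Nat.card_congr (ConnectedComponent.equivOfReachableIff Sum.inl (fun _ _ => bdg_reachable_inl_iff)
    fun v => ⟨BDGVert.toElem v, bdg_reachable_inl_toElem v⟩).symm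

theorem stmt1 (X : Set ℕ) (hfin : X.Finite) (h1 : ∀ x ∈ X, 1 < x) :
    Nat.card (bdg X).ConnectedComponent = Nat.card (cdGraph X).ConnectedComponent :=
  stmt1_general X
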